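/- arXiv:2103.14885 — 5 statements merged into one kernel-verified Lean document; each statement's English description precedes it below -/
import Mathlib

section
/- Let F : U → ℝ^S be the smooth (polynomial) map sending the free parameters ξ = (η_1,…,η_{C−1}, (θ_{jrc})_{j=1,…,J; r=1,…,M_j−1; c=0,…,C−1}) of a latent class model to the vector of all response-pattern probabilities (P(r | η, θ))_{r}, where U is the open domain on which all η_c (including η_0 = 1 − Σ_{c≥1} η_c) and all θ_{jrc} (including θ_{j0c} = 1 − Σ_{r≥1} θ_{jrc}) are strictly positive, and let d = (C−1) + C·Σ_{j=1}^J (M_j − 1) be the number of free parameters. Let ξ⁰ ∈ U and suppose the derivative of F has constant rank on some neighborhood of ξ⁰ (ξ⁰ is a regular point). Then F is injective on some neighborhood of ξ⁰ (local identifiability) if and only if the Jacobian matrix of F at ξ⁰ has full column rank d. -/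
/-- The map sending the free parameters
`ξ = (η_1,…,η_{C-1}, (θ_{jrc})_{r ≥ 1})` of a latent class model to the vector
of all response-pattern probabilities. Classes are `Fin (C+2)` (so `C ≥ 2`),
item `j` has `M j + 2` response levels; `η_0` and `θ_{j0c}` are recovered as
one minus the sum of the free coordinates via `Fin.cons`. -/
noncomputable def Fmap {J C : ℕ} (M : Fin J → ℕ)
    (ξ : (Fin (C + 1) → ℝ) × ((j : Fin J) → Fin (M j + 1) → Fin (C + 2) → ℝ))
    (r : (j : Fin J) → Fin (M j + 2)) : ℝ :=
  ∑ c : Fin (C + 2),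
    (Fin.cons (1 - ∑ c', ξ.1 c') ξ.1 : Fin (C + 2) → ℝ) c *
      ∏ j, (Fin.cons (fun c'' => 1 - ∑ s, ξ.2 j s c'') (ξ.2 j) :
        Fin (M j + 2) → Fin (C + 2) → ℝ) (r j) c

noncomputable def jacRank {J C : ℕ} (M : Fin J → ℕ)
    (ξ : (Fin (C + 1) → ℝ) × ((j : Fin J) → Fin (M j + 1) → Fin (C + 2) → ℝ)) : ℕ :=
  Module.finrank ℝ (LinearMap.range (fderiv ℝ (Fmap M) ξ).toLinearMap)

/-!
If `Df(x₀)` is injective, `P ∘ f` for a continuous left inverse `P` of `Df(x₀)` has invertible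
derivative at `x₀`, so it (and hence `f`) is injective near `x₀` by the inverse function theorem.

Conversely, suppose `K = ker Df(x₀) ≠ 0`, let `Q` be a projection onto `range Df(x₀)` and `π` one
onto `K`. Then `φ = (Q ∘ f, π)` is a local diffeomorphism at `x₀`. The rank of `Q ∘ Df(x)` cannot
drop near `x₀`, while that of `Df(x)` is constant there, so `ker (Q ∘ Df(x)) = ker Df(x)`. Hence
`f ∘ φ⁻¹` is constant along the line through `φ(x₀)` in a direction `(0, v)`, `v ∈ K \ 0`, and `f`
takes the value `f(x₀)` at points `x ≠ x₀` arbitrarily close to `x₀`.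
-/

open Module Set Filter Topology Function

namespace LinearMap

variable {K V W U : Type*} [Field K] [AddCommGroup V] [Module K V] [FiniteDimensional K V]
  [AddCommGroup W] [Module K W] [AddCommGroup U] [Module K U]

theorem ker_comp_eq_of_finrank_range_le (T : V →ₗ[K] W) (Q : W →ₗ[K] U)
    (h : finrank K (range T) ≤ finrank K (range (Q ∘ₗ T))) : ker (Q ∘ₗ T) = ker T := by
  refine (Submodule.eq_of_le_of_finrank_le (ker_le_ker_comp T Q) ?_).symm
  have := finrank_range_add_finrank_ker T
  have := finrank_range_add_finrank_ker (Q ∘ₗ T)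
  omega

theorem finrank_range_eq_iff_injective (T : V →ₗ[K] W) :
    finrank K (range T) = finrank K V ↔ Injective T := by
  rw [← ker_eq_bot, ← Submodule.finrank_eq_zero, ← finrank_range_add_finrank_ker T]
  omega

end LinearMap

section

variable {𝕜 E F G : Type*} [RCLike 𝕜] [NormedAddCommGroup E] [NormedSpace 𝕜 E]
  [NormedAddCommGroup F] [NormedSpace 𝕜 F] [NormedAddCommGroup G] [NormedSpace 𝕜 G]

theorem eventually_eq_of_eventually_hasDerivAt_zero {g : 𝕜 → F} {a : 𝕜}
    (h : ∀ᶠ t in 𝓝 a, HasDerivAt g 0 t) : ∀ᶠ t in 𝓝 a, g t = g a := by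
  obtain ⟨s, hs, hso, has⟩ := eventually_nhds_iff.1 h
  have := hso.isOpen_inter_preimage_of_deriv_eq_zero
    (fun t ht => (hs t ht).differentiableAt.differentiableWithinAt) (fun t ht => (hs t ht).deriv)
    {g a}
  filter_upwards [this.mem_nhds ⟨has, rfl⟩] with t ht using ht.2

theorem eventually_add_smul_eq_of_eventually_hasFDerivAt {g : G → F} {y0 u : G}
    (hg : ∀ᶠ y in 𝓝 y0, ∃ g' : G →L[𝕜] F, HasFDerivAt g g' y ∧ g' u = 0) :
    ∀ᶠ t in 𝓝 (0 : 𝕜), g (y0 + t • u) = g y0 := by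
  have hline : Tendsto (fun t : 𝕜 => y0 + t • u) (𝓝 0) (𝓝 y0) :=
    Continuous.tendsto' (by fun_prop) _ _ (by simp)
  have hderiv : ∀ᶠ t in 𝓝 (0 : 𝕜), HasDerivAt (fun t => g (y0 + t • u)) 0 t := by
    filter_upwards [hline.eventually hg] with t ⟨g', hg', hu⟩
    simpa [hu, comp_def] using hg'.comp_hasDerivAt t (((hasDerivAt_id t).smul_const u).const_add y0)
  simpa using eventually_eq_of_eventually_hasDerivAt_zero hderiv

theorem OpenPartialHomeomorph.frequently_eq_of_eventually_fderiv_symm_eq_zero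
    [CompleteSpace E] (Φ : OpenPartialHomeomorph E G) {x0 : E} (hx0 : x0 ∈ Φ.source)
    {f : E → F} {u : G} (hu : u ≠ 0)
    (hflat : ∀ᶠ x in 𝓝 x0, ∃ (f' : E →L[𝕜] F) (e : E ≃L[𝕜] G),
      HasFDerivAt f f' x ∧ HasFDerivAt Φ (e : E →L[𝕜] G) x ∧ f' (e.symm u) = 0) :
    ∃ᶠ x in 𝓝[≠] x0, f x = f x0 := by
  have hy0 : Φ x0 ∈ Φ.target := Φ.map_source hx0
  have hsymm : Tendsto Φ.symm (𝓝 (Φ x0)) (𝓝 x0) := by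
    have := Φ.continuousAt_symm hy0
    rwa [ContinuousAt, Φ.left_inv hx0] at this
  have hchart : ∀ᶠ y in 𝓝 (Φ x0), ∃ g' : G →L[𝕜] F, HasFDerivAt (f ∘ Φ.symm) g' y ∧ g' u = 0 := by
    filter_upwards [Φ.open_target.mem_nhds hy0, hsymm.eventually hflat]
      with y hy ⟨f', e, hf', hΦ, hker⟩
    exact ⟨f' ∘L (e.symm : G →L[𝕜] E), hf'.comp y (Φ.hasFDerivAt_symm hy hΦ), hker⟩
  set γ : 𝕜 → E := fun t => Φ.symm (Φ x0 + t • u)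
  have hline : Tendsto (fun t : 𝕜 => Φ x0 + t • u) (𝓝 0) (𝓝 (Φ x0)) :=
    Continuous.tendsto' (by fun_prop) _ _ (by simp)
  have hγ : Tendsto γ (𝓝[≠] 0) (𝓝[≠] x0) := by
    refine tendsto_nhdsWithin_of_tendsto_nhds_of_eventually_within _
      ((hsymm.comp hline).mono_left nhdsWithin_le_nhds) ?_
    filter_upwards [self_mem_nhdsWithin,
      nhdsWithin_le_nhds (hline.eventually (Φ.open_target.mem_nhds hy0))] with t ht htarget hγt
    have : Φ x0 + t • u = Φ x0 := by rw [← Φ.right_inv htarget]; exact congrArg Φ hγt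
    exact ht (by simpa [hu] using this)
  have hconst := eventually_add_smul_eq_of_eventually_hasFDerivAt hchart
  refine hγ.frequently (Eventually.frequently ?_)
  filter_upwards [nhdsWithin_le_nhds hconst] with t ht
  simpa [γ, Φ.left_inv hx0] using ht

theorem ContinuousAt.eventually_ker_comp_eq_ker [FiniteDimensional 𝕜 E] {X : Type*}
    [TopologicalSpace X] {A : X → E →L[𝕜] F} {x0 : X} (hA : ContinuousAt A x0) (Q : F →L[𝕜] G)
    (hrank : ∀ᶠ x in 𝓝 x0, finrank 𝕜 (LinearMap.range (A x).toLinearMap) ≤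
      finrank 𝕜 (LinearMap.range (Q ∘L A x0).toLinearMap)) :
    ∀ᶠ x in 𝓝 x0, LinearMap.ker (Q ∘L A x).toLinearMap = LinearMap.ker (A x).toLinearMap := by
  set n := finrank 𝕜 (LinearMap.range (Q ∘L A x0).toLinearMap)
  have hQA : ContinuousAt (fun x => Q ∘L A x) x0 := by fun_prop
  have hsemi := hQA.eventually_mem ((isOpen_setOfPred_nat_le_rank n).mem_nhds
    (by rw [mem_ofPred_eq, LinearMap.rank, ← finrank_eq_rank]))
  filter_upwards [hrank, hsemi] with x h1 h2
  rw [LinearMap.rank, ← finrank_eq_rank, Nat.cast_le] at h2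
  exact LinearMap.ker_comp_eq_of_finrank_range_le _ _ (h1.trans h2)

theorem ContinuousLinearMap.isInvertible_comp_prod_of_retractions [FiniteDimensional 𝕜 E]
    (L : E →L[𝕜] F) {Q : F →L[𝕜] LinearMap.range L.toLinearMap}
    (hQ : ∀ y : LinearMap.range L.toLinearMap, Q y = y) {π : E →L[𝕜] LinearMap.ker L.toLinearMap}
    (hπ : ∀ v : LinearMap.ker L.toLinearMap, π v = v) :
    ((Q ∘L L).prod π).IsInvertible := by
  have hinj : Injective ((Q ∘L L).prod π) := by
    refine (injective_iff_map_eq_zero _).2 fun w hw => ?_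
    have hLw : w ∈ LinearMap.ker L.toLinearMap := by
      have h : Q (L w) = 0 := congrArg Prod.fst hw
      rw [hQ ⟨L w, LinearMap.mem_range_self _ w⟩] at h
      exact LinearMap.mem_ker.2 (congrArg Subtype.val h)
    have h : π ((⟨w, hLw⟩ : LinearMap.ker L.toLinearMap) : E) = 0 := congrArg Prod.snd hw
    rw [hπ] at h
    exact congrArg Subtype.val h
  have hdim : finrank 𝕜 E =
      finrank 𝕜 (LinearMap.range L.toLinearMap × LinearMap.ker L.toLinearMap) := by
    rw [finrank_prod, LinearMap.finrank_range_add_finrank_ker]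
  exact ⟨(LinearEquiv.ofInjectiveOfFinrankEq _ hinj hdim).toContinuousLinearEquiv, rfl⟩

theorem HasStrictFDerivAt.exists_mem_nhds_injOn [CompleteSpace E] [FiniteDimensional 𝕜 F]
    {f : E → F} {L : E →L[𝕜] F} {x0 : E} (hf : HasStrictFDerivAt f L x0) (hL : Injective L) :
    ∃ W ∈ 𝓝 x0, InjOn f W := by
  obtain ⟨P, hP⟩ := ContinuousLinearMap.HasLeftInverse.of_injective_of_finiteDimensional hL
  have hPf : HasStrictFDerivAt (P ∘ f) (ContinuousLinearEquiv.refl 𝕜 E : E →L[𝕜] E) x0 := by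
    rw [show (ContinuousLinearEquiv.refl 𝕜 E : E →L[𝕜] E) = P ∘L L from
      ContinuousLinearMap.ext fun v => (hP v).symm]
    exact P.hasStrictFDerivAt.comp x0 hf
  set Φ := hPf.toOpenPartialHomeomorph (P ∘ f)
  refine ⟨Φ.source, Φ.open_source.mem_nhds hPf.mem_toOpenPartialHomeomorph_source, ?_⟩
  exact InjOn.of_comp (g := P) (hPf.toOpenPartialHomeomorph_coe ▸ Φ.injOn)

theorem ContDiff.frequently_eq_of_finrank_range_fderiv_le [FiniteDimensional 𝕜 E]
    [FiniteDimensional 𝕜 F] {f : E → F} (hf : ContDiff 𝕜 1 f) {x0 : E}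
    (hrank : ∀ᶠ x in 𝓝 x0, finrank 𝕜 (LinearMap.range (fderiv 𝕜 f x).toLinearMap) ≤
      finrank 𝕜 (LinearMap.range (fderiv 𝕜 f x0).toLinearMap))
    (hL : ¬ Injective (fderiv 𝕜 f x0)) :
    ∃ᶠ x in 𝓝[≠] x0, f x = f x0 := by
  have := FiniteDimensional.complete 𝕜 E
  set L := fderiv 𝕜 f x0
  set R := LinearMap.range L.toLinearMap
  set K := LinearMap.ker L.toLinearMap
  obtain ⟨Q, hQ⟩ := Submodule.ClosedComplemented.of_finiteDimensional R
  obtain ⟨π, hπ⟩ := L.ker_closedComplemented_of_finiteDimensional_range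
  set Dφ : E → E →L[𝕜] R × K := fun x => (Q ∘L fderiv 𝕜 f x).prod π
  have hDf := hf.continuous_fderiv one_ne_zero
  have hDφ : Continuous Dφ := (ContinuousLinearMap.prodₗᵢ 𝕜).continuous.comp
    (by fun_prop : Continuous fun x => (Q ∘L fderiv 𝕜 f x, π))
  obtain ⟨e0, he0⟩ : (Dφ x0).IsInvertible := L.isInvertible_comp_prod_of_retractions hQ hπ
  have hφ : HasStrictFDerivAt (fun x => (Q (f x), π x)) (e0 : E →L[𝕜] R × K) x0 := by
    rw [he0]
    exact (Q.hasStrictFDerivAt.comp x0 (hf.contDiffAt.hasStrictFDerivAt one_ne_zero)).prodMk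
      π.hasStrictFDerivAt
  have hQLrange : LinearMap.range (Q ∘L L).toLinearMap = ⊤ :=
    LinearMap.range_eq_top.2 fun y => by
      obtain ⟨v, hv⟩ := y.2
      exact ⟨v, (hQ ⟨L v, LinearMap.mem_range_self _ v⟩).trans (Subtype.ext hv)⟩
  have hker := hDf.continuousAt.eventually_ker_comp_eq_ker Q (x0 := x0)
    (hrank.mono fun x hx => hx.trans_eq (by rw [hQLrange, finrank_top]))
  obtain ⟨v, hvK, hv0⟩ := Submodule.ne_bot_iff K |>.1 (by rwa [Ne, LinearMap.ker_eq_bot])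
  let u : R × K := (0, ⟨v, hvK⟩)
  refine (hφ.toOpenPartialHomeomorph _).frequently_eq_of_eventually_fderiv_symm_eq_zero (𝕜 := 𝕜)
    hφ.mem_toOpenPartialHomeomorph_source (u := u) (by simpa [u] using hv0) ?_
  filter_upwards [hDφ.continuousAt.eventually_mem (ContinuousLinearEquiv.isOpen.mem_nhds
    ⟨e0, he0⟩), hker] with x ⟨e, he⟩ hkerx
  refine ⟨fderiv 𝕜 f x, e, (hf.differentiable one_ne_zero x).hasFDerivAt, ?_, ?_⟩
  · rw [hφ.toOpenPartialHomeomorph_coe, he]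
    exact (Q.hasFDerivAt.comp x (hf.differentiable one_ne_zero x).hasFDerivAt).prodMk
      π.hasFDerivAt
  · have hw : Dφ x (e.symm u) = u := by rw [← he]; exact e.apply_symm_apply u
    have : e.symm u ∈ LinearMap.ker (Q ∘L fderiv 𝕜 f x).toLinearMap := congrArg Prod.fst hw
    rwa [hkerx] at this

theorem ContDiff.exists_mem_nhds_injOn_iff_injective_fderiv [FiniteDimensional 𝕜 E]
    [FiniteDimensional 𝕜 F] {f : E → F} (hf : ContDiff 𝕜 1 f) {x0 : E}
    (hrank : ∀ᶠ x in 𝓝 x0, finrank 𝕜 (LinearMap.range (fderiv 𝕜 f x).toLinearMap) =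
      finrank 𝕜 (LinearMap.range (fderiv 𝕜 f x0).toLinearMap)) :
    (∃ W ∈ 𝓝 x0, InjOn f W) ↔ Injective (fderiv 𝕜 f x0) := by
  have := FiniteDimensional.complete 𝕜 E
  refine ⟨fun ⟨W, hW, hinj⟩ => ?_,
    (hf.contDiffAt.hasStrictFDerivAt one_ne_zero).exists_mem_nhds_injOn⟩
  by_contra hL
  obtain ⟨x, hfx, hxW, hx⟩ := ((hf.frequently_eq_of_finrank_range_fderiv_le
    (hrank.mono fun _ h => h.le) hL).and_eventually
      (Eventually.and (mem_nhdsWithin_of_mem_nhds hW) self_mem_nhdsWithin)).exists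
  exact hx (hinj hxW (mem_of_mem_nhds hW) hfx)

end

theorem finrank_latentClassParams (J C : ℕ) (M : Fin J → ℕ) :
    finrank ℝ ((Fin (C + 1) → ℝ) × ((j : Fin J) → Fin (M j + 1) → Fin (C + 2) → ℝ)) =
      (C + 1) + (C + 2) * ∑ j, (M j + 1) := by
  simp [finrank_prod, finrank_pi_fintype, Finset.mul_sum, mul_comm]

theorem contDiff_Fmap {J C : ℕ} (M : Fin J → ℕ) {n : WithTop ℕ∞} :
    ContDiff ℝ n (Fmap (C := C) M) := by
  have hθ : ∀ j s c, ContDiff ℝ n fun ξ : (Fin (C + 1) → ℝ) ×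
      ((j : Fin J) → Fin (M j + 1) → Fin (C + 2) → ℝ) => ξ.2 j s c :=
    fun j s c => contDiff_pi.1 (contDiff_pi.1 (contDiff_pi.1 contDiff_snd j) s) c
  refine contDiff_pi.2 fun r => ContDiff.sum fun c _ =>
    ContDiff.mul ?_ (contDiff_prod fun j _ => ?_)
  · cases c using Fin.cases <;> simp only [Fin.cons_zero, Fin.cons_succ] <;> fun_prop
  cases r j using Fin.cases with
  | zero => exact contDiff_const.sub (ContDiff.sum fun s _ => hθ j s c)
  | succ s => exact hθ j s c

theorem stmt4_general {J C : ℕ} (M : Fin J → ℕ)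
    (ξ0 : (Fin (C + 1) → ℝ) × ((j : Fin J) → Fin (M j + 1) → Fin (C + 2) → ℝ))
    -- ξ0 is a regular point: the derivative has constant rank near ξ0
    (hreg : ∃ V ∈ nhds ξ0, ∀ ξ ∈ V, jacRank M ξ = jacRank M ξ0) :
    (∃ W ∈ nhds ξ0, Set.InjOn (Fmap M) W) ↔
      jacRank M ξ0 = (C + 1) + (C + 2) * ∑ j, (M j + 1) := by
  obtain ⟨V, hV, hVrank⟩ := hreg
  rw [← finrank_latentClassParams, jacRank, LinearMap.finrank_range_eq_iff_injective]
  exact (contDiff_Fmap M).exists_mem_nhds_injOn_iff_injective_fderiv (mem_of_superset hV hVrank)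

/-- Theorem 1 / Goodman's criterion: at a regular point `ξ0` of the
open positivity domain, `Fmap` is locally injective iff its Jacobian at `ξ0` has full
column rank `d = (C−1) + C·Σ_j (M_j − 1)`. -/
theorem stmt4 {J C : ℕ} (M : Fin J → ℕ)
    (ξ0 : (Fin (C + 1) → ℝ) × ((j : Fin J) → Fin (M j + 1) → Fin (C + 2) → ℝ))
    -- ξ0 lies in the open domain U where all probabilities are strictly positive
    (hpos : (∀ c, 0 < ξ0.1 c) ∧ 0 < 1 - ∑ c, ξ0.1 c ∧
      (∀ j r c, 0 < ξ0.2 j r c) ∧ ∀ j c, 0 < 1 - ∑ r, ξ0.2 j r c)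
    -- ξ0 is a regular point: the derivative has constant rank near ξ0
    (hreg : ∃ V ∈ nhds ξ0, ∀ ξ ∈ V, jacRank M ξ = jacRank M ξ0) :
    (∃ W ∈ nhds ξ0, Set.InjOn (Fmap M) W) ↔
      jacRank M ξ0 = (C + 1) + (C + 2) * ∑ j, (M j + 1) :=
  stmt4_general M ξ0 hreg
end

section
/- Let Ψ be an S×C real matrix with nonnegative entries each of whose columns sums to 1 (each column is a probability distribution over the S response patterns), and let η ∈ ℝ^C be a probability vector with all entries strictly positive. If the columns of Ψ are linearly dependent, then there exists a probability vector η′ ∈ ℝ^C with η′ ≠ η and Ψη′ = Ψη. Consequently, the latent class membership probabilities are not identifiable from the marginal distribution Ψη when the columns of Ψ are linearly dependent, i.e., linear independence of the columns of Ψ is necessary for identifiability. -/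
/-- no-covariate part of Proposition 1: necessity of Condition (C3).
If the columns of the conditional-pattern-probability matrix `Ψ` are linearly
dependent, the class membership probabilities are not identifiable from `Ψη`. -/
theorem stmt7 {S C : ℕ} (Ψ : Matrix (Fin S) (Fin C) ℝ)
    (hnn : ∀ r c, 0 ≤ Ψ r c) (hcol : ∀ c, ∑ r, Ψ r c = 1)
    (η : Fin C → ℝ) (hη : ∀ c, 0 < η c) (hηs : ∑ c, η c = 1)
    (hdep : ¬ LinearIndependent ℝ (fun c : Fin C => fun r : Fin S => Ψ r c)) :
    ∃ η' : Fin C → ℝ, (∀ c, 0 ≤ η' c) ∧ (∑ c, η' c = 1) ∧ η' ≠ η ∧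
      Ψ.mulVec η' = Ψ.mulVec η := by
  rw [Fintype.not_linearIndependent_iff] at hdep
  obtain ⟨g, hg, c₀, hc₀⟩ := hdep
  -- pointwise version of the dependence
  have hgr : ∀ r, ∑ c, g c * Ψ r c = 0 := by
    intro r
    have := congrFun hg r
    simpa [Finset.sum_apply] using this
  -- the coefficients sum to zero
  have hgs : ∑ c, g c = 0 := by
    calc ∑ c, g c = ∑ c, g c * ∑ r, Ψ r c := by
          simp [hcol]
      _ = ∑ c, ∑ r, g c * Ψ r c := by
          simp [Finset.mul_sum]
      _ = ∑ r, ∑ c, g c * Ψ r c := Finset.sum_comm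
      _ = 0 := by simp [hgr]
  have hne : (Finset.univ : Finset (Fin C)).Nonempty := ⟨c₀, Finset.mem_univ _⟩
  set m := Finset.univ.inf' hne η with hmdef
  have hm : 0 < m := by
    obtain ⟨cm, _, hcm⟩ := Finset.exists_mem_eq_inf' hne η
    rw [hmdef, hcm]; exact hη cm
  have hmle : ∀ c, m ≤ η c := fun c => Finset.inf'_le _ (Finset.mem_univ c)
  set B := Finset.univ.sup' hne (fun c => |g c|) with hBdef
  have hBle : ∀ c, |g c| ≤ B := fun c =>
    Finset.le_sup' (fun c => |g c|) (Finset.mem_univ c)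
  have hB : 0 < B := lt_of_lt_of_le (abs_pos.mpr hc₀) (hBle c₀)
  set ε := m / B with hεdef
  have hε : 0 < ε := div_pos hm hB
  refine ⟨fun c => η c + ε * g c, ?_, ?_, ?_, ?_⟩
  · intro c
    have h1 : ε * |g c| ≤ m := by
      rw [hεdef, div_mul_eq_mul_div, div_le_iff₀ hB]
      exact mul_le_mul_of_nonneg_left (hBle c) hm.le
    have h2 : -(ε * g c) ≤ m := by
      calc -(ε * g c) ≤ |ε * g c| := neg_le_abs _
        _ = ε * |g c| := by rw [abs_mul, abs_of_pos hε]
        _ ≤ m := h1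
    show (0:ℝ) ≤ η c + ε * g c
    linarith [hmle c]
  · have : ∑ c, (η c + ε * g c) = ∑ c, η c + ε * ∑ c, g c := by
      rw [Finset.sum_add_distrib, Finset.mul_sum]
    rw [this, hηs, hgs]; ring
  · intro h
    have := congrFun h c₀
    have : ε * g c₀ = 0 := by linarith [congrFun h c₀]
    rcases mul_eq_zero.mp this with h' | h'
    · exact absurd h' hε.ne'
    · exact hc₀ h'
  · funext r
    simp only [Matrix.mulVec, dotProduct]
    have : ∑ c, Ψ r c * (η c + ε * g c)
        = ∑ c, Ψ r c * η c + ε * ∑ c, g c * Ψ r c := by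
      rw [Finset.mul_sum, ← Finset.sum_add_distrib]
      exact Finset.sum_congr rfl fun c _ => by ring
    rw [this, hgr r]; ring
end

section
/- Consider a RegLCM. Let Φ′ be the S×C matrix (S = ∏_j M_j) with entries Φ′_{rc} = ∏_{j=1}^J θ⁰_{j r_j c}, where θ⁰_{jrc} = exp(γ_{jrc}) / Σ_{s=0}^{M_j−1} exp(γ_{jsc}) are the zero-covariate conditional response probabilities, and for each subject i let Ψ′^i be the S×C matrix with entries ∏_{j=1}^J θ^i_{j r_j c}. If the columns of Φ′ are linearly dependent, then for every subject i the columns of Ψ′^i are linearly dependent; consequently, for each subject i there exists a probability vector η̄ ∈ ℝ^C with η̄ ≠ η^i and Ψ′^i η̄ = Ψ′^i η^i, so the subject-level class membership probabilities are not identifiable. -/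
/-- Latent class membership probability `η_c` of a subject with covariates `x`,
induced by the coefficients `β` via the multinomial logit link. -/
noncomputable def etaFun {ι : Type*} [Fintype ι] {p : ℕ}
    (x : Fin (p + 1) → ℝ) (β : ι → Fin (p + 1) → ℝ) (c : ι) : ℝ :=
  Real.exp (∑ t, x t * β c t) / ∑ l, Real.exp (∑ t, x t * β l t)

/-- Conditional response probability `θ_{jrc}`; item `j` has `M j + 2` levels. -/
noncomputable def thetaFun {J : ℕ} {ι : Type*} {q : ℕ} {M : Fin J → ℕ}
    (z : (j : Fin J) → Fin q → ℝ)
    (γ : (j : Fin J) → Fin (M j + 2) → ι → ℝ)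
    (lam : (j : Fin J) → Fin (M j + 2) → Fin q → ℝ)
    (j : Fin J) (r : Fin (M j + 2)) (c : ι) : ℝ :=
  Real.exp (γ j r c + ∑ t, z j t * lam j r t) /
    ∑ s, Real.exp (γ j s c + ∑ t, z j t * lam j s t)

/-- Zero-covariate conditional response probability `θ⁰_{jrc}`. -/
noncomputable def theta0 {J : ℕ} {ι : Type*} {M : Fin J → ℕ}
    (γ : (j : Fin J) → Fin (M j + 2) → ι → ℝ)
    (j : Fin J) (r : Fin (M j + 2)) (c : ι) : ℝ :=
  Real.exp (γ j r c) / ∑ s, Real.exp (γ j s c)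

/-- covariate part of Proposition 1: necessity of Condition (A4).
If the columns of the zero-covariate pattern-probability matrix `Φ′` are linearly
dependent, then for every subject the columns of `Ψ′^i` are linearly dependent and
the subject-level class membership probabilities are not identifiable. Classes are
`Fin (C+2)` (so `C ≥ 2`); item `j` has `M j + 2` response levels. -/
theorem stmt8 {J C p q N : ℕ} (M : Fin J → ℕ)
    (x : Fin N → Fin (p + 1) → ℝ) (z : Fin N → (j : Fin J) → Fin q → ℝ)
    (hx : ∀ i, x i 0 = 1)
    (β : Fin (C + 2) → Fin (p + 1) → ℝ)
    (γ : (j : Fin J) → Fin (M j + 2) → Fin (C + 2) → ℝ)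
    (lam : (j : Fin J) → Fin (M j + 2) → Fin q → ℝ)
    (hβ0 : β 0 = 0) (hγ0 : ∀ j c, γ j 0 c = 0) (hlam0 : ∀ j, lam j 0 = 0)
    (hdep : ¬ LinearIndependent ℝ
      (fun (c : Fin (C + 2)) (r : (j : Fin J) → Fin (M j + 2)) =>
        ∏ j, theta0 γ j (r j) c)) :
    ∀ i : Fin N,
      (¬ LinearIndependent ℝ
        (fun (c : Fin (C + 2)) (r : (j : Fin J) → Fin (M j + 2)) =>
          ∏ j, thetaFun (z i) γ lam j (r j) c)) ∧
      ∃ η' : Fin (C + 2) → ℝ, (∀ c, 0 ≤ η' c) ∧ (∑ c, η' c = 1) ∧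
        η' ≠ (fun c => etaFun (x i) β c) ∧
        ∀ r : (j : Fin J) → Fin (M j + 2),
          ∑ c, (∏ j, thetaFun (z i) γ lam j (r j) c) * η' c =
          ∑ c, (∏ j, thetaFun (z i) γ lam j (r j) c) * etaFun (x i) β c := by
  intro i
  classical
  -- notation
  set Ψ : Fin (C + 2) → ((j : Fin J) → Fin (M j + 2)) → ℝ :=
    fun c r => ∏ j, thetaFun (z i) γ lam j (r j) c with hΨ
  set Φ : Fin (C + 2) → ((j : Fin J) → Fin (M j + 2)) → ℝ :=
    fun c r => ∏ j, theta0 γ j (r j) c with hΦ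
  -- denominators
  have hDipos : ∀ j c, 0 < ∑ s, Real.exp (γ j s c + ∑ t, z i j t * lam j s t) :=
    fun j c => Finset.sum_pos (fun s _ => Real.exp_pos _) Finset.univ_nonempty
  have hD0pos : ∀ j c, 0 < ∑ s, Real.exp (γ j s c) :=
    fun j c => Finset.sum_pos (fun s _ => Real.exp_pos _) Finset.univ_nonempty
  set k : Fin (C + 2) → ℝ := fun c =>
    ∏ j, (∑ s, Real.exp (γ j s c)) / (∑ s, Real.exp (γ j s c + ∑ t, z i j t * lam j s t))
    with hk
  have hkpos : ∀ c, 0 < k c := fun c =>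
    Finset.prod_pos (fun j _ => div_pos (hD0pos j c) (hDipos j c))
  -- key factorization
  have key : ∀ (r : (j : Fin J) → Fin (M j + 2)) c,
      Ψ c r = (∏ j, Real.exp (∑ t, z i j t * lam j (r j) t)) * (k c * Φ c r) := by
    intro r c
    rw [hΨ, hΦ, hk]
    rw [← Finset.prod_mul_distrib, ← Finset.prod_mul_distrib]
    refine Finset.prod_congr rfl fun j _ => ?_
    rw [thetaFun, theta0, Real.exp_add]
    field_simp
  -- extract dependence coefficients
  rw [Fintype.not_linearIndependent_iff] at hdep
  obtain ⟨g, hg0, c0, hc0⟩ := hdep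
  have hgpt : ∀ r, ∑ c, g c * Φ c r = 0 := by
    intro r
    have := congrFun hg0 r
    simpa [Finset.sum_apply] using this
  set v : Fin (C + 2) → ℝ := fun c => g c / k c with hv
  have hvpt : ∀ r, ∑ c, v c * Ψ c r = 0 := by
    intro r
    have : ∑ c, v c * Ψ c r
        = (∏ j, Real.exp (∑ t, z i j t * lam j (r j) t)) * ∑ c, g c * Φ c r := by
      rw [Finset.mul_sum]
      refine Finset.sum_congr rfl fun c _ => ?_
      rw [key r c]
      simp only [hv]
      rw [div_mul_eq_mul_div, div_eq_iff (hkpos c).ne']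
      ring
    rw [this, hgpt r, mul_zero]
  have hvne : v c0 ≠ 0 := by
    rw [hv]
    exact div_ne_zero hc0 (ne_of_gt (hkpos c0))
  -- columns of Ψ sum to 1
  have hcol : ∀ c, ∑ r : (j : Fin J) → Fin (M j + 2), Ψ c r = 1 := by
    intro c
    rw [hΨ]
    rw [← Fintype.prod_sum (fun j s => thetaFun (z i) γ lam j s c)]
    refine Finset.prod_eq_one fun j _ => ?_
    simp only [thetaFun]
    rw [← Finset.sum_div]
    exact div_self (ne_of_gt (hDipos j c))
  -- hence the v's sum to zero
  have hvsum : ∑ c, v c = 0 := by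
    have h1 : ∑ r : (j : Fin J) → Fin (M j + 2), ∑ c, v c * Ψ c r = 0 := by
      simp [hvpt]
    rw [Finset.sum_comm] at h1
    calc ∑ c, v c = ∑ c, v c * ∑ r : (j : Fin J) → Fin (M j + 2), Ψ c r := by
          simp [hcol]
      _ = 0 := by rw [← h1]; exact Finset.sum_congr rfl fun c _ => Finset.mul_sum _ _ _
  -- membership probabilities
  set η : Fin (C + 2) → ℝ := fun c => etaFun (x i) β c with hη
  have hηpos : ∀ c, 0 < η c := fun c =>
    div_pos (Real.exp_pos _) (Finset.sum_pos (fun l _ => Real.exp_pos _) Finset.univ_nonempty)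
  have hηsum : ∑ c, η c = 1 := by
    rw [hη]
    simp only [etaFun]
    rw [← Finset.sum_div]
    exact div_self (ne_of_gt (Finset.sum_pos (fun l _ => Real.exp_pos _) Finset.univ_nonempty))
  -- pick epsilon
  obtain ⟨cm, _, hcm⟩ := Finset.exists_min_image Finset.univ η ⟨0, Finset.mem_univ 0⟩
  set m : ℝ := η cm with hm
  have hmpos : 0 < m := hηpos cm
  set B : ℝ := (∑ c, |v c|) + 1 with hB
  have hBpos : 0 < B := by
    have : 0 ≤ ∑ c, |v c| := Finset.sum_nonneg fun c _ => abs_nonneg _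
    linarith
  have hvB : ∀ c, |v c| ≤ B := by
    intro c
    have : |v c| ≤ ∑ c, |v c| :=
      Finset.single_le_sum (fun c _ => abs_nonneg (v c)) (Finset.mem_univ c)
    linarith
  set ε : ℝ := m / B with hε
  have hεpos : 0 < ε := div_pos hmpos hBpos
  refine ⟨?_, fun c => η c + ε * v c, ?_, ?_, ?_, ?_⟩
  · rw [Fintype.not_linearIndependent_iff]
    refine ⟨v, ?_, c0, hvne⟩
    funext r
    simpa [Finset.sum_apply] using hvpt r
  · intro c
    show (0 : ℝ) ≤ η c + ε * v c
    have h1 : ε * |v c| ≤ m := by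
      rw [hε, div_mul_eq_mul_div, div_le_iff₀ hBpos]
      have := hvB c
      nlinarith [abs_nonneg (v c)]
    have h2 : ε * -|v c| ≤ ε * v c := mul_le_mul_of_nonneg_left (neg_abs_le _) hεpos.le
    have h3 : m ≤ η c := hcm c (Finset.mem_univ c)
    nlinarith
  · rw [Finset.sum_add_distrib, hηsum, ← Finset.mul_sum, hvsum, mul_zero, add_zero]
  · intro hcontra
    have := congrFun hcontra c0
    have : ε * v c0 = 0 := by linarith [this]
    rcases mul_eq_zero.1 this with h | h
    · exact absurd h (ne_of_gt hεpos)
    · exact hvne h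
  · intro r
    have : ∑ c, Ψ c r * (η c + ε * v c) = ∑ c, Ψ c r * η c + ε * ∑ c, v c * Ψ c r := by
      rw [Finset.mul_sum, ← Finset.sum_add_distrib]
      refine Finset.sum_congr rfl fun c _ => ?_
      ring
    calc ∑ c, Ψ c r * (η c + ε * v c) = ∑ c, Ψ c r * η c := by
          rw [this, hvpt r, mul_zero, add_zero]
      _ = _ := rfl
end

section
/- Consider a latent class model whose classes are attribute profiles α ∈ {0,1}^K (K ≥ 1), with class probabilities η_α > 0 summing to 1 and item response probabilities θ_{jrα} > 0 with Σ_{r=0}^{M_j−1} θ_{jrα} = 1 for j = 1,…,J. Write α = (α_1, α′) with α′ ∈ {0,1}^{K−1}, and suppose that only item 1 depends on the first attribute: θ_{jr(1,α′)} = θ_{jr(0,α′)} for every j ≥ 2, every r, and every α′. Then there exists ε > 0 such that for every E with |E − 1| < ε and E ≠ 1, the parameters defined by η̄_{(0,α′)} = η_{(0,α′)} + (1−E)η_{(1,α′)}, η̄_{(1,α′)} = E·η_{(1,α′)}, θ̄_{1r(0,α′)} = θ_{1r(0,α′)}, θ̄_{1r(1,α′)} = (1/E)·θ_{1r(1,α′)}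 + (1 − 1/E)·θ_{1r(0,α′)}, and θ̄_{jrα} = θ_{jrα} for j ≥ 2, are valid parameters (all strictly positive, η̄ summing to 1 and each θ̄_{j·α} summing to 1), satisfy (η̄, θ̄) ≠ (η, θ), and produce the same response-pattern distribution: Σ_α η̄_α ∏_{j=1}^J θ̄_{j r_j α} = Σ_α η_α ∏_{j=1}^J θ_{j r_j α} for every pattern r. Hence the parameters are not identifiable when some attribute is required by only one item. -/
/-!
Fix the attributes `α'` other than the first one. Since items `j ≥ 2` do not see the first
attribute, the two classes `(0, α')` and `(1, α')` differ only in item 1, so together they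
contribute `η₀ p₀ + η₁ p₁` (times a common factor) to every pattern probability, where `pᵢ` is
the response distribution of item 1. Moving the mass `(1 - E) η₁` from class `(1, α')` to
class `(0, α')` and replacing `p₁` by `p₁ / E + (1 - 1 / E) p₀` leaves this mixture unchanged.
At `E = 1` the new parameters are the old ones and depend continuously on `E`, so they stay
strictly positive for `E` near `1`.
-/

open Filter Topology

noncomputable section

variable {ι R : Type*}

def transferWeight (E : ℝ) (η : Bool × ι → ℝ) : Bool × ι → ℝ :=
  fun α => if α.1 then E * η α else η α + (1 - E) * η (true, α.2)

def transferResponse (E : ℝ) (p : R → Bool × ι → ℝ) : R → Bool × ι → ℝ :=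
  fun r α => if α.1 then (1 / E) * p r α + (1 - 1 / E) * p r (false, α.2) else p r α

@[simp]
theorem transferWeight_one (η : Bool × ι → ℝ) : transferWeight 1 η = η := by
  ext ⟨_ | _, a⟩ <;> simp [transferWeight]

@[simp]
theorem transferResponse_one (p : R → Bool × ι → ℝ) : transferResponse 1 p = p := by
  ext r ⟨_ | _, a⟩ <;> simp [transferResponse]

theorem continuousAt_transferWeight (η : Bool × ι → ℝ) (α : Bool × ι) :
    ContinuousAt (fun E => transferWeight E η α) 1 := by
  rcases α with ⟨_ | _, a⟩ <;> simp only [transferWeight, Bool.false_eq_true, ↓reduceIte] <;>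
    fun_prop

theorem continuousAt_transferResponse (p : R → Bool × ι → ℝ) (r : R) (α : Bool × ι) :
    ContinuousAt (fun E => transferResponse E p r α) 1 := by
  rcases α with ⟨_ | _, a⟩ <;> simp only [transferResponse, Bool.false_eq_true, ↓reduceIte]
  · fun_prop
  · fun_prop (disch := norm_num)

theorem eventually_transferWeight_pos [Finite ι] {η : Bool × ι → ℝ} (hη : ∀ α, 0 < η α) :
    ∀ᶠ E in 𝓝 1, ∀ α, 0 < transferWeight E η α :=
  eventually_all.2 fun α => (continuousAt_transferWeight η α).eventually_const_lt
    (by simpa using hη α)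

theorem eventually_transferResponse_pos [Finite ι] [Finite R] {p : R → Bool × ι → ℝ} (hp : ∀ r α, 0 < p r α) :
    ∀ᶠ E in 𝓝 1, ∀ r α, 0 < transferResponse E p r α :=
  eventually_all.2 fun r => eventually_all.2 fun α =>
    (continuousAt_transferResponse p r α).eventually_const_lt (by simpa using hp r α)

theorem sum_transferWeight [Fintype ι] (E : ℝ) (η : Bool × ι → ℝ) :
    ∑ α, transferWeight E η α = ∑ α, η α := by
  simp only [transferWeight, Fintype.sum_prod_type, Fintype.sum_bool, if_true,
    Bool.false_eq_true, if_false, Finset.sum_add_distrib, ← Finset.mul_sum]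
  ring

theorem sum_transferResponse [Fintype R] (E : ℝ) {p : R → Bool × ι → ℝ} (hp : ∀ α, ∑ r, p r α = 1)
    (α : Bool × ι) : ∑ r, transferResponse E p r α = 1 := by
  rcases α with ⟨_ | _, a⟩
  · simpa [transferResponse] using hp (false, a)
  · simp only [transferResponse, if_true, Finset.sum_add_distrib, ← Finset.mul_sum, hp]
    ring

theorem transferWeight_ne_self {E : ℝ} (hE : E ≠ 1) {η : Bool × ι → ℝ} {a : ι}
    (ha : η (true, a) ≠ 0) : transferWeight E η ≠ η := fun h => by
  have := congrFun h (true, a)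
  simp only [transferWeight, if_true] at this
  exact hE (mul_eq_right₀ ha |>.1 this)

theorem sum_transferWeight_mul_transferResponse [Fintype ι] {E : ℝ} (hE : E ≠ 0) (η : Bool × ι → ℝ)
    (p : R → Bool × ι → ℝ) (r : R) {f : Bool × ι → ℝ} (hf : ∀ a, f (true, a) = f (false, a)) :
    ∑ α, transferWeight E η α * (transferResponse E p r α * f α) =
      ∑ α, η α * (p r α * f α) := by
  simp only [transferWeight, transferResponse, Fintype.sum_prod_type, Fintype.sum_bool,
    if_true, Bool.false_eq_true, if_false, ← Finset.sum_add_distrib, hf]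
  refine Finset.sum_congr rfl fun a _ => ?_
  field_simp
  ring

end

/-- Attribute profiles are `Bool × (Fin K → Bool)`, the first coordinate being the first
attribute; the items are `Fin (J + 1)`, item 1 being `0`, and item `j` has `M j + 2` response
levels. -/
theorem stmt9 {K J : ℕ} (M : Fin (J + 1) → ℕ)
    (η : Bool × (Fin K → Bool) → ℝ)
    (hη : ∀ α, 0 < η α) (hηs : ∑ α, η α = 1)
    (θ : (j : Fin (J + 1)) → Fin (M j + 2) → Bool × (Fin K → Bool) → ℝ)
    (hθ : ∀ j r α, 0 < θ j r α) (hθs : ∀ j α, ∑ r, θ j r α = 1)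
    -- only item 1 depends on the first attribute
    (hone : ∀ j : Fin (J + 1), j ≠ 0 → ∀ (r : Fin (M j + 2)) (α' : Fin K → Bool),
      θ j r (true, α') = θ j r (false, α')) :
    ∃ ε > (0 : ℝ), ∀ E : ℝ, |E - 1| < ε → E ≠ 1 →
      ∃ (ηb : Bool × (Fin K → Bool) → ℝ)
        (θb : (j : Fin (J + 1)) → Fin (M j + 2) → Bool × (Fin K → Bool) → ℝ),
        -- the explicit construction of the alternative parameters
        (ηb = fun α => if α.1 then E * η α else η α + (1 - E) * η (true, α.2)) ∧
        (θb = fun j r α =>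
          if j = 0 then
            (if α.1 then (1 / E) * θ j r α + (1 - 1 / E) * θ j r (false, α.2)
             else θ j r α)
          else θ j r α) ∧
        -- validity of the alternative parameters
        (∀ α, 0 < ηb α) ∧ (∑ α, ηb α = 1) ∧
        (∀ j r α, 0 < θb j r α) ∧ (∀ j α, ∑ r, θb j r α = 1) ∧
        -- they differ from the original parameters
        (ηb ≠ η ∨ θb ≠ θ) ∧
        -- yet produce the same response-pattern distribution
        (∀ r : (j : Fin (J + 1)) → Fin (M j + 2),
          ∑ α, ηb α * ∏ j, θb j (r j) α = ∑ α, η α * ∏ j, θ j (r j) α) := by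
  have hnear := (lt_mem_nhds one_pos).and
    ((eventually_transferWeight_pos hη).and (eventually_transferResponse_pos (hθ 0)))
  obtain ⟨ε, hε, hgood⟩ := Metric.eventually_nhds_iff.1 hnear
  refine ⟨ε, hε, fun E hE hE1 => ?_⟩
  obtain ⟨hE0, hηb, hθb⟩ := hgood (by rwa [Real.dist_eq])
  refine ⟨transferWeight E η, fun j r α => if j = 0 then transferResponse E (θ j) r α
    else θ j r α, rfl, rfl, hηb, by rw [sum_transferWeight, hηs], ?_, ?_,
    .inl (transferWeight_ne_self hE1 (hη (true, default)).ne'), fun r => ?_⟩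
  · intro j r α
    dsimp only
    split_ifs with hj
    · subst hj; exact hθb r α
    · exact hθ j r α
  · intro j α
    dsimp only
    split_ifs
    · exact sum_transferResponse E (hθs j) α
    · exact hθs j α
  · simp only [Fin.prod_univ_succ, if_true, Fin.succ_ne_zero, if_false]
    exact sum_transferWeight_mul_transferResponse hE0.ne' η (θ 0) (r 0) fun a =>
      Finset.prod_congr rfl fun i _ => hone i.succ i.succ_ne_zero _ a
end

section
/- (Kruskal's theorem.) Let C ≥ 1 and let A, Ā be I×C real matrices, B, B̄ be J×C real matrices, and D, D̄ be K×C real matrices such that Σ_{c=1}^C A_{ic} B_{jc} D_{kc} = Σ_{c=1}^C Ā_{ic} B̄_{jc} D̄_{kc} for all indices (i, j, k). If the Kruskal ranks satisfy rank_K(A) + rank_K(B) + rank_K(D) ≥ 2C + 2, then there exist a permutation σ of {1,…,C} and nonzero real scalars a_c, b_c, d_c with a_c·b_c·d_c = 1 for each c, such that Ā_{·c} = a_c·A_{·σ(c)}, B̄_{·c} = b_c·B_{·σ(c)}, and D̄_{·c} = d_c·D_{·σ(c)} for every c; that is, the three-way decomposition is unique up to simultaneous permutation and rescaling of columns. -/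
/-- Kruskal rank of a real matrix: the largest `k` such that every set of `k`
columns is linearly independent. -/
noncomputable def kruskalRank {ι : Type*} {n : ℕ} (A : Matrix ι (Fin n) ℝ) : ℕ :=
  sSup {k | k ≤ n ∧ ∀ s : Finset (Fin n), s.card = k →
    LinearIndependent ℝ (fun c : s => fun i => A i (c : Fin n))}

/-!
Kruskal's permutation lemma: let the columns `h c` of `H` be `k`-independent with
`2 ≤ k ≤ C`, and suppose that every linear functional `f` which is nonzero on at most
`C - k + 1` of the columns `h' c` of `H'` is nonzero on at most as many of the `h c`. Then
`H' = H Π Λ`. Indeed, by descending induction on `n < k`, the span of any `n` columns of `H'`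
contains at least `n` columns of `H`; for `n = 1` this matches every column of `H'` with a
multiple of a column of `H`.

The hypothesis of the permutation lemma for `D` comes from Kruskal's rank lemma: applying `f`
in the third mode of the tensor gives `A diag(f ∘ D) Bᵀ = Ā diag(f ∘ D̄) B̄ᵀ`, whose rank is at
most `ω̄ = #{c | f (D̄ c) ≠ 0}` and at least `min(k_A, ω) + min(k_B, ω) - ω` for
`ω = #{c | f (D c) ≠ 0}`. Doing the same in the other two modes gives three permutations.
Functionals vanishing on well-chosen columns of `A` and `B` show that the three permutations
coincide, and the scalars then have product one because the Khatri–Rao products `a_c ⊗ b_c`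
are linearly independent.
-/

open Finset Module Submodule

theorem Finset.card_mul_add_card_le_of_inter_eq {α β : Type*} [Fintype α] [DecidableEq α]
    {T : Finset β} {F : β → Finset α} {M : Finset α} {q : ℕ} (hMF : ∀ x ∈ T, M ⊆ F x)
    (hF : ∀ x ∈ T, #(F x) = #M + q) (hFF : ∀ x ∈ T, ∀ y ∈ T, x ≠ y → F x ∩ F y = M) :
    #T * q + #M ≤ Fintype.card α := by
  have hdisj : (T : Set β).PairwiseDisjoint fun x => F x \ M := by
    intro x hx y hy hxy
    rw [Function.onFun, disjoint_left]
    intro c hcx hcy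
    have : c ∈ F x ∩ F y := mem_inter.2 ⟨(mem_sdiff.1 hcx).1, (mem_sdiff.1 hcy).1⟩
    rw [hFF x hx y hy hxy] at this
    exact (mem_sdiff.1 hcx).2 this
  have hcount : ∑ x ∈ T, #(F x \ M) ≤ #(univ \ M) := by
    rw [← card_biUnion hdisj]
    exact card_le_card (biUnion_subset.2 fun x _ => sdiff_subset_sdiff (subset_univ _) le_rfl)
  rw [sum_congr rfl fun x hx => by
      rw [card_sdiff_of_subset (hMF x hx), hF x hx, Nat.add_sub_cancel_left],
    sum_const, smul_eq_mul, card_sdiff_of_subset (subset_univ _), card_univ] at hcount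
  have := card_le_univ M
  omega

section LinearAlgebra

variable {𝕜 V ι : Type*} [Field 𝕜] [AddCommGroup V] [Module 𝕜 V]

variable (𝕜) in
def KIndependent (k : ℕ) (v : ι → V) : Prop :=
  ∀ s : Finset ι, #s ≤ k → LinearIndepOn 𝕜 v s

theorem LinearIndepOn.finrank_span_image_finset {v : ι → V} {s : Finset ι}
    (h : LinearIndepOn 𝕜 v s) : finrank 𝕜 (span 𝕜 (v '' s)) = #s := by
  rw [Set.image_eq_range, finrank_span_eq_card h]
  simp

theorem finrank_span_image_finset_le (v : ι → V) (s : Finset ι) :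
    finrank 𝕜 (span 𝕜 (v '' s)) ≤ #s := by
  rw [Set.image_eq_range]
  exact (finrank_range_le_card _).trans_eq (Fintype.card_coe s)

theorem Submodule.exists_dual_apply_eq_zero_iff [Infinite 𝕜] (W : Submodule 𝕜 V) {s : Set V}
    (hs : s.Finite) : ∃ f : Dual 𝕜 V, ∀ x ∈ s, f x = 0 ↔ x ∈ W := by
  have : Finite {x : s // (x : V) ∉ W} := by
    have := hs.to_subtype
    infer_instance
  obtain ⟨f, hfW, hf⟩ := Dual.exists_forall_mem_ne_zero_of_forall_exists W.dualAnnihilator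
    (fun x : {x : s // (x : V) ∉ W} => Dual.eval 𝕜 V x) fun x => by
      obtain ⟨f, hfx, hfW⟩ := W.exists_dual_map_eq_bot_of_notMem x.2 inferInstance
      exact ⟨f, (mem_dualAnnihilator f).2 fun w hw =>
        (mem_bot 𝕜).1 (hfW ▸ mem_map_of_mem hw), hfx⟩
  exact ⟨f, fun x hx => ⟨fun h0 => by_contra fun hxW => hf ⟨⟨x, hx⟩, hxW⟩ h0,
    fun hxW => (mem_dualAnnihilator f).1 hfW x hxW⟩⟩

theorem kIndependent_iff_notMem_span {k : ℕ} {v : ι → V} :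
    KIndependent 𝕜 k v ↔ ∀ s : Finset ι, #s < k → ∀ c ∉ s, v c ∉ span 𝕜 (v '' s) := by
  classical
  refine ⟨fun h s hs c hc => ?_, fun h s hs => ?_⟩
  · have := h (insert c s) (by rw [card_insert_of_notMem hc]; omega)
    rw [coe_insert, linearIndepOn_insert (by simpa using hc)] at this
    exact this.2
  · induction s using Finset.induction_on with
    | empty => simp [linearIndepOn_empty]
    | insert c s hc ih =>
      rw [card_insert_of_notMem hc] at hs
      rw [coe_insert, linearIndepOn_insert (by simpa using hc)]
      exact ⟨ih (by omega), h s (by omega) c hc⟩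

namespace KIndependent

variable {k : ℕ} {v v' : ι → V}

theorem notMem_span (h : KIndependent 𝕜 k v) {s : Finset ι} (hs : #s < k) {c : ι}
    (hc : c ∉ s) : v c ∉ span 𝕜 (v '' s) :=
  kIndependent_iff_notMem_span.1 h s hs c hc

theorem ne_zero (h : KIndependent 𝕜 k v) (hk : 1 ≤ k) (c : ι) : v c ≠ 0 :=
  (h {c} (by simpa using hk)).ne_zero (by simp)

theorem eq_zero_of_sum_smul_eq_zero [Fintype ι] [DecidableEq 𝕜] (h : KIndependent 𝕜 k v)
    {x : ι → 𝕜} (hx : ∑ c, x c • v c = 0) (hw : hammingNorm x ≤ k) : x = 0 := by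
  have hs := Fintype.linearIndependent_iff.1 (h _ hw) (fun c => x c) (by
    change ∑ c : ({c | x c ≠ 0} : Finset ι), x c • v c = 0
    rw [Finset.sum_coe_sort _ (fun c => x c • v c), Finset.sum_filter_of_ne (by aesop), hx])
  ext c
  by_contra hc
  exact hc (hs ⟨c, by simpa using hc⟩)

theorem exists_dual_apply_eq_zero_iff [Infinite 𝕜] [Fintype ι] (h : KIndependent 𝕜 k v)
    {s : Finset ι} (hs : #s < k) : ∃ f : Dual 𝕜 V, ∀ c, f (v c) = 0 ↔ c ∈ s := by
  obtain ⟨f, hf⟩ := (span 𝕜 (v '' s)).exists_dual_apply_eq_zero_iff (Set.finite_range v)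
  exact ⟨f, fun c => (hf _ ⟨c, rfl⟩).trans
    ⟨fun hc => by_contra fun hcs => h.notMem_span hs hcs hc, fun hc => subset_span ⟨c, hc, rfl⟩⟩⟩

theorem finrank_span_image (h : KIndependent 𝕜 k v) {s : Finset ι} (hs : #s ≤ k) :
    finrank 𝕜 (span 𝕜 (v '' s)) = #s :=
  (h s hs).finrank_span_image_finset

variable [FiniteDimensional 𝕜 V]

theorem card_filter_mem_le_finrank [Fintype ι] (h : KIndependent 𝕜 k v) (W : Submodule 𝕜 V)
    [DecidablePred (v · ∈ W)] (hW : finrank 𝕜 W < k) : #{c | v c ∈ W} ≤ finrank 𝕜 W := by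
  by_contra! hlt
  obtain ⟨t, hts, ht⟩ := exists_subset_card_eq hlt
  have hspan : span 𝕜 (v '' t) ≤ W :=
    span_le.2 <| by rintro _ ⟨c, hc, rfl⟩; exact (mem_filter.1 (hts hc)).2
  have := Submodule.finrank_mono hspan
  rw [h.finrank_span_image (by omega)] at this
  omega

theorem span_image_inf_span_image [DecidableEq ι] (h : KIndependent 𝕜 k v) {s t : Finset ι}
    (hst : #(s ∪ t) ≤ k) : span 𝕜 (v '' s) ⊓ span 𝕜 (v '' t) = span 𝕜 (v '' ↑(s ∩ t)) := by
  have hsup : span 𝕜 (v '' s) ⊔ span 𝕜 (v '' t) = span 𝕜 (v '' ↑(s ∪ t)) := by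
    rw [coe_union, Set.image_union, span_union]
  have hdim := finrank_sup_add_finrank_inf_eq (span 𝕜 (v '' s)) (span 𝕜 (v '' t))
  have hs : #s ≤ #(s ∪ t) := card_le_card subset_union_left
  have ht : #t ≤ #(s ∪ t) := card_le_card subset_union_right
  rw [hsup, h.finrank_span_image hst, h.finrank_span_image (by omega),
    h.finrank_span_image (by omega)] at hdim
  have hle : span 𝕜 (v '' ↑(s ∩ t)) ≤ span 𝕜 (v '' s) ⊓ span 𝕜 (v '' t) :=
    le_inf (span_mono (Set.image_mono (by simp))) (span_mono (Set.image_mono (by simp)))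
  refine (eq_of_le_of_finrank_le hle ?_).symm
  rw [h.finrank_span_image ((card_le_card inter_subset_union).trans hst)]
  have := card_union_add_card_inter s t
  omega

open scoped Classical in
theorem le_card_filter_mem_span_of_succ [Fintype ι] (hv : KIndependent 𝕜 k v)
    (hv' : KIndependent 𝕜 k v') {n : ℕ} (hn : n + 2 ≤ k) (hk : k ≤ Fintype.card ι)
    (hsucc : ∀ s : Finset ι, #s = n + 1 → n + 1 ≤ #{c | v c ∈ span 𝕜 (v' '' s)})
    {s : Finset ι} (hs : #s = n) : n ≤ #{c | v c ∈ span 𝕜 (v' '' s)} := by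
  set M : Finset ι := {c | v c ∈ span 𝕜 (v' '' s)}
  set F : ι → Finset ι := fun x => {c | v c ∈ span 𝕜 (v' '' ↑(insert x s))}
  by_contra! hM
  -- The spans of `v' '' insert x s` (`x ∉ s`) meet pairwise in the span of `v' '' s`, so the
  -- sets `F x \ M` are disjoint. There are `card ι - n ≥ 2` of them, each of size `n + 1 - #M ≥ 2`:
  -- too many for the `card ι - #M` indices outside `M`.
  have hMF : ∀ x ∈ univ \ s, M ⊆ F x := fun x _ c hc => mem_filter.2
    ⟨mem_univ c, span_mono (Set.image_mono (coe_subset.2 (subset_insert x s))) (mem_filter.1 hc).2⟩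
  have hF : ∀ x ∈ univ \ s, #(F x) = #M + (n + 1 - #M) := by
    intro x hx
    change #({c | v c ∈ span 𝕜 (v' '' ↑(insert x s))} : Finset ι) = _
    have hcard : #(insert x s) = n + 1 := by rw [card_insert_of_notMem (mem_sdiff.1 hx).2, hs]
    have := hv.card_filter_mem_le_finrank (span 𝕜 (v' '' ↑(insert x s)))
      (by rw [hv'.finrank_span_image (by omega)]; omega)
    rw [hv'.finrank_span_image (by omega), hcard] at this
    have := hsucc _ hcard
    omega
  have hFF : ∀ x ∈ univ \ s, ∀ y ∈ univ \ s, x ≠ y → F x ∩ F y = M := by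
    intro x hx y hy hxy
    rw [mem_sdiff] at hx hy
    have hinter : insert x s ∩ insert y s = s := by
      ext c
      simp only [mem_inter, mem_insert]
      grind
    have hunion := card_union_add_card_inter (insert x s) (insert y s)
    rw [hinter, card_insert_of_notMem hx.2, card_insert_of_notMem hy.2] at hunion
    ext c
    simp only [mem_inter, F, M, mem_filter, mem_univ, true_and]
    rw [← Submodule.mem_inf, hv'.span_image_inf_span_image (by omega), hinter]
  have hcount := card_mul_add_card_le_of_inter_eq hMF hF hFF
  rw [card_sdiff_of_subset (subset_univ _), card_univ, hs] at hcount
  set a := Fintype.card ι - n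
  set b := n + 1 - #M
  have ha : 2 ≤ a := by omega
  have hb : 2 ≤ b := by omega
  have hab : a + b ≤ a * b := by nlinarith
  omega

end KIndependent

section Rank

variable {U W Z : Type*} [AddCommGroup U] [Module 𝕜 U] [AddCommGroup W] [Module 𝕜 W]
  [AddCommGroup Z] [Module 𝕜 Z]

theorem Submodule.finrank_map_add_finrank_inf_ker [FiniteDimensional 𝕜 V] (f : V →ₗ[𝕜] W)
    (R : Submodule 𝕜 V) :
    finrank 𝕜 (R.map f) + finrank 𝕜 ↥(R ⊓ LinearMap.ker f) = finrank 𝕜 R := by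
  have := (f.domRestrict R).finrank_range_add_finrank_ker
  rwa [LinearMap.range_domRestrict, LinearMap.ker_domRestrict, ← finrank_map_subtype_eq,
    map_comap_subtype] at this

/-- Frobenius' rank inequality. -/
theorem LinearMap.finrank_range_comp_add_finrank_range_comp_le [FiniteDimensional 𝕜 V]
    [FiniteDimensional 𝕜 W] (f : U →ₗ[𝕜] V) (g : V →ₗ[𝕜] W) (h : W →ₗ[𝕜] Z) :
    finrank 𝕜 (range (h ∘ₗ g)) + finrank 𝕜 (range (g ∘ₗ f)) ≤
      finrank 𝕜 (range (h ∘ₗ g ∘ₗ f)) + finrank 𝕜 (range g) := by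
  have h₁ := (range (g ∘ₗ f)).finrank_map_add_finrank_inf_ker h
  have h₂ := (range g).finrank_map_add_finrank_inf_ker h
  have h₃ := Submodule.finrank_mono (inf_le_inf_right (ker h) (range_comp_le_range f g))
  rw [← range_comp] at h₁ h₂
  omega

end Rank

end LinearAlgebra

namespace Matrix

variable {𝕜 R l m n o : Type*} [Field 𝕜] [CommRing R]

section Rank

variable [Fintype m] [Fintype n] [Fintype o]

theorem rank_mul_add_rank_mul_le (A : Matrix l m 𝕜) (B : Matrix m n 𝕜) (C : Matrix n o 𝕜) :
    (A * B).rank + (B * C).rank ≤ (A * B * C).rank + B.rank := by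
  have := LinearMap.finrank_range_comp_add_finrank_range_comp_le C.mulVecLin B.mulVecLin
    A.mulVecLin
  rwa [← mulVecLin_mul, ← mulVecLin_mul, ← mulVecLin_mul, ← Matrix.mul_assoc] at this

theorem card_le_rank_of_linearIndepOn_col (M : Matrix m n 𝕜) {s : Finset n}
    (h : LinearIndepOn 𝕜 M.col s) : #s ≤ M.rank := by
  rw [rank_eq_finrank_span_cols, ← h.finrank_span_image_finset]
  exact Submodule.finrank_mono (span_mono (Set.image_subset_range _ _))

variable [DecidableEq n] [DecidableEq 𝕜] {k : ℕ}

theorem min_le_rank_mul_diagonal {X : Matrix m n 𝕜} (hX : KIndependent 𝕜 k X.col) (d : n → 𝕜) :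
    min k (hammingNorm d) ≤ (X * diagonal d).rank := by
  obtain ⟨s, hs, hcard⟩ := exists_subset_card_eq (min_le_right k (hammingNorm d))
  have hd : ∀ c : s, d c ≠ 0 := fun c => (mem_filter.1 (hs c.2)).2
  have hind : LinearIndepOn 𝕜 (X * diagonal d).col s := by
    have hcol : (fun c : (s : Set n) => (X * diagonal d).col c) =
        (fun c => Units.mk0 _ (hd c)) • fun c : (s : Set n) => X.col c := by
      funext c
      ext i
      simp [Units.smul_def, mul_comm]
    unfold LinearIndepOn
    rw [hcol]
    exact (hX s (hcard ▸ min_le_left _ _)).units_smul _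
  exact hcard ▸ card_le_rank_of_linearIndepOn_col _ hind

/-- Kruskal's rank lemma. -/
theorem min_add_min_le_rank_mul_diagonal_mul_transpose {X : Matrix m n 𝕜} {Y : Matrix o n 𝕜}
    {kX kY : ℕ} (hX : KIndependent 𝕜 kX X.col) (hY : KIndependent 𝕜 kY Y.col) (d : n → 𝕜) :
    min kX (hammingNorm d) + min kY (hammingNorm d) ≤
      (X * diagonal d * Yᵀ).rank + hammingNorm d := by
  have hF := rank_mul_add_rank_mul_le X (diagonal d) Yᵀ
  have hXd := min_le_rank_mul_diagonal hX d
  have hYd : min kY (hammingNorm d) ≤ (diagonal d * Yᵀ).rank := by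
    rw [← rank_transpose, transpose_mul, diagonal_transpose, transpose_transpose]
    exact min_le_rank_mul_diagonal hY d
  rw [rank_diagonal, Fintype.card_subtype] at hF
  exact (add_le_add hXd hYd).trans hF

end Rank

variable [Fintype n]

theorem sum_mul_mul_rotate {A A' : Matrix l n R} {B B' : Matrix m n R} {D D' : Matrix o n R}
    (h : ∀ i j k, ∑ c, A i c * B j c * D k c = ∑ c, A' i c * B' j c * D' k c) (j : m) (k : o)
    (i : l) : ∑ c, B j c * D k c * A i c = ∑ c, B' j c * D' k c * A' i c := by
  simpa only [mul_comm, mul_left_comm] using h i j k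

theorem mul_diagonal_mul_transpose_apply [DecidableEq n] (X : Matrix m n R) (d : n → R)
    (Y : Matrix o n R) (i : m) (j : o) :
    (X * diagonal d * Yᵀ) i j = ∑ c, X i c * d c * Y j c := by
  simp only [mul_apply (M := X * diagonal d), mul_diagonal, transpose_apply]

theorem dual_apply_mulVec (f : Dual R (m → R)) (M : Matrix m n R) (a : n → R) :
    f (M *ᵥ a) = ∑ c, a c * f (M.col c) := by
  simp [mulVec_eq_sum, map_sum, col]

theorem mul_diagonal_dual_col_mul_transpose_apply [DecidableEq n] (f : Dual R (o → R))
    (X : Matrix l n R) (Y : Matrix m n R) (H : Matrix o n R) (i : l) (j : m) :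
    (X * diagonal (f ∘ H.col) * Yᵀ) i j = f fun r => ∑ c, X i c * Y j c * H r c := by
  have : (fun r => ∑ c, X i c * Y j c * H r c) = H *ᵥ fun c => X i c * Y j c := by
    ext r
    simp only [mulVec, dotProduct]
    exact sum_congr rfl fun c _ => by ring
  rw [mul_diagonal_mul_transpose_apply, this, dual_apply_mulVec]
  exact sum_congr rfl fun c _ => by simp only [Function.comp_apply]; ring

theorem sum_dual_col_mul_dual_col_mul [Fintype m] [Fintype l] (u : Dual R (m → R))
    (w : Dual R (l → R)) (A : Matrix m n R) (B : Matrix l n R) (D : Matrix o n R) (r : o) :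
    ∑ c, u (A.col c) * w (B.col c) * D r c =
      u (fun i => w (fun j => ∑ c, A i c * B j c * D r c)) := by
  have hB : ∀ i, (fun j => ∑ c, A i c * B j c * D r c) = B *ᵥ fun c => A i c * D r c := by
    intro i
    ext j
    simp only [mulVec, dotProduct]
    exact sum_congr rfl fun c _ => by ring
  have hA : (fun i => w fun j => ∑ c, A i c * B j c * D r c) =
      A *ᵥ fun c => w (B.col c) * D r c := by
    ext i
    rw [hB, dual_apply_mulVec]
    simp only [mulVec, dotProduct]
    exact sum_congr rfl fun c _ => by ring
  rw [hA, dual_apply_mulVec]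
  exact sum_congr rfl fun c _ => by ring

theorem sum_dual_mul_dual_smul_col_eq [Fintype l] [Fintype m] {A A' : Matrix l n R}
    {B B' : Matrix m n R} {D D' : Matrix o n R}
    (heq : ∀ i j k, ∑ c, A i c * B j c * D k c = ∑ c, A' i c * B' j c * D' k c)
    {σA σB σD : Equiv.Perm n} {a b d : n → R} (hA : ∀ c, A'.col c = a c • A.col (σA c))
    (hB : ∀ c, B'.col c = b c • B.col (σB c)) (hD : ∀ c, D'.col c = d c • D.col (σD c))
    (u : Dual R (l → R)) (w : Dual R (m → R)) :
    ∑ c, (u (A.col c) * w (B.col c)) • D.col c =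
      ∑ c, (a c * b c * d c * u (A.col (σA c)) * w (B.col (σB c))) • D.col (σD c) := by
  ext r
  simp only [Finset.sum_apply, Pi.smul_apply, smul_eq_mul, col_apply]
  rw [sum_dual_col_mul_dual_col_mul u w A B D r,
    funext fun i => congrArg w (funext fun j => heq i j r), ← sum_dual_col_mul_dual_col_mul]
  refine sum_congr rfl fun c _ => ?_
  have hD' : D' r c = d c * D r (σD c) := congrFun (hD c) r
  rw [hA, hB, map_smul, map_smul, smul_eq_mul, smul_eq_mul, hD']
  ring

end Matrix

section PermutationLemma

variable {𝕜 V ι : Type*} [Field 𝕜] [DecidableEq 𝕜] [AddCommGroup V] [Module 𝕜 V] [Fintype ι]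

variable (𝕜) in
/-- Condition (P) of Kruskal's permutation lemma, with the row vectors `x' H` of the paper
replaced by linear functionals `f` applied to the columns. -/
def WeightCondition (k : ℕ) (v v' : ι → V) : Prop :=
  ∀ f : Dual 𝕜 V, hammingNorm (f ∘ v') + k ≤ Fintype.card ι + 1 →
    hammingNorm (f ∘ v) ≤ hammingNorm (f ∘ v')

open scoped Classical

namespace WeightCondition

variable [Infinite 𝕜] {k : ℕ} {v v' : ι → V}

theorem card_filter_le (hP : WeightCondition 𝕜 k v v') (W : Submodule 𝕜 V)
    (hW : k ≤ #{c | v' c ∈ W} + 1) : #{c | v' c ∈ W} ≤ #{c | v c ∈ W} := by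
  -- Take `f` vanishing on exactly those columns that lie in `W`.
  obtain ⟨f, hf⟩ :=
    W.exists_dual_apply_eq_zero_iff ((Set.finite_range v).union (Set.finite_range v'))
  have hweight : ∀ u : ι → V, (∀ c, u c ∈ Set.range v ∪ Set.range v') →
      hammingNorm (f ∘ u) + #{c | u c ∈ W} = Fintype.card ι := by
    intro u hu
    have : hammingNorm (f ∘ u) = #{c | u c ∉ W} := by
      unfold hammingNorm
      congr 1
      ext c
      simp [hf _ (hu c)]
    rw [this, add_comm, card_filter_add_card_filter_not, card_univ]
  have h₁ := hweight v fun c => Or.inl ⟨c, rfl⟩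
  have h₂ := hweight v' fun c => Or.inr ⟨c, rfl⟩
  have := hP f (by omega)
  omega

variable [FiniteDimensional 𝕜 V]

theorem filter_mem_span_eq (hP : WeightCondition 𝕜 k v v') (hv : KIndependent 𝕜 k v)
    {s : Finset ι} (hs : #s + 1 = k) :
    ({c | v' c ∈ span 𝕜 (v' '' s)} : Finset ι) = s ∧ #{c | v c ∈ span 𝕜 (v' '' s)} = #s := by
  have hsub : s ⊆ ({c | v' c ∈ span 𝕜 (v' '' s)} : Finset ι) :=
    fun c hc => mem_filter.2 ⟨mem_univ c, subset_span ⟨c, hc, rfl⟩⟩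
  have h₁ := card_le_card hsub
  have h₂ := hP.card_filter_le (span 𝕜 (v' '' s)) (by omega)
  have h₃ := finrank_span_image_finset_le (𝕜 := 𝕜) v' s
  have h₄ := hv.card_filter_mem_le_finrank (span 𝕜 (v' '' s)) (by omega)
  exact ⟨(eq_of_subset_of_card_le hsub (by omega)).symm, by omega⟩

theorem kIndependent (hP : WeightCondition 𝕜 k v v') (hv : KIndependent 𝕜 k v)
    (hk : k ≤ Fintype.card ι) : KIndependent 𝕜 k v' := by
  refine kIndependent_iff_notMem_span.2 fun s hs c hc hmem => ?_
  obtain ⟨t, hst, htc, ht⟩ := exists_subsuperset_card_eq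
    (show s ⊆ univ.erase c from fun x hx => mem_erase.2 ⟨fun h => hc (h ▸ hx), mem_univ x⟩)
    (show #s ≤ k - 1 by omega) (by rw [card_erase_of_mem (mem_univ c), card_univ]; omega)
  have hct : c ∈ ({c | v' c ∈ span 𝕜 (v' '' t)} : Finset ι) :=
    mem_filter.2 ⟨mem_univ c, span_mono (Set.image_mono (coe_subset.2 hst)) hmem⟩
  rw [(hP.filter_mem_span_eq hv (by omega)).1] at hct
  exact (mem_erase.1 (htc hct)).1 rfl

theorem le_card_filter_mem_span (hP : WeightCondition 𝕜 k v v') (hv : KIndependent 𝕜 k v)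
    (hk : k ≤ Fintype.card ι) {n : ℕ} (hn : n < k) :
    ∀ s : Finset ι, #s = n → n ≤ #{c | v c ∈ span 𝕜 (v' '' s)} := by
  have hv' := hP.kIndependent hv hk
  induction (show n ≤ k - 1 by omega) using Nat.decreasingInduction with
  | self => exact fun s hs => ((hP.filter_mem_span_eq hv (by omega)).2.trans hs).ge
  | of_succ m hm ih =>
    exact fun s hs => hv.le_card_filter_mem_span_of_succ hv' (by omega) hk (ih (by omega)) hs

/-- Kruskal's permutation lemma. -/
theorem exists_perm (hP : WeightCondition 𝕜 k v v') (hv : KIndependent 𝕜 k v) (hk2 : 2 ≤ k)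
    (hk : k ≤ Fintype.card ι) :
    ∃ (σ : Equiv.Perm ι) (μ : ι → 𝕜), (∀ c, μ c ≠ 0) ∧ ∀ c, v' c = μ c • v (σ c) := by
  have hv' := hP.kIndependent hv hk
  have hmatch : ∀ c, ∃ c', ∃ μ : 𝕜, μ ≠ 0 ∧ v' c = μ • v c' := by
    intro c
    obtain ⟨c', hc'⟩ :=
      card_pos.1 (hP.le_card_filter_mem_span hv hk (by omega) {c} (card_singleton c))
    rw [mem_filter, coe_singleton, Set.image_singleton, mem_span_singleton] at hc'
    obtain ⟨t, ht⟩ := hc'.2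
    have ht0 : t ≠ 0 := by
      rintro rfl
      exact hv.ne_zero (by omega) c' (by simpa using ht.symm)
    exact ⟨c', t⁻¹, inv_ne_zero ht0, by rw [← ht, smul_smul, inv_mul_cancel₀ ht0, one_smul]⟩
  choose σ μ hμ hσ using hmatch
  have hinj : Function.Injective σ := by
    intro c₁ c₂ h
    by_contra hne
    refine hv'.notMem_span (s := {c₂}) (by simp; omega) (by simpa using hne) ?_
    rw [coe_singleton, Set.image_singleton, mem_span_singleton]
    exact ⟨μ c₁ / μ c₂, by rw [hσ c₁, hσ c₂, h, smul_smul, div_mul_cancel₀ _ (hμ c₂)]⟩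
  exact ⟨Equiv.ofBijective σ (Finite.injective_iff_bijective.1 hinj), μ, hμ, hσ⟩

end WeightCondition

end PermutationLemma

open Matrix

section Kruskal

variable {l m n : Type*} {C : ℕ}

theorem kruskalRank_mem (A : Matrix m (Fin C) ℝ) : kruskalRank A ∈ {k | k ≤ C ∧
    ∀ s : Finset (Fin C), #s = k → LinearIndependent ℝ (fun c : s => fun i => A i (c : Fin C))} :=
  Nat.sSup_mem ⟨0, Nat.zero_le _, fun s hs => by
    rw [card_eq_zero.1 hs]
    exact linearIndependent_empty_type⟩ ⟨C, fun _ hk => hk.1⟩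

theorem kruskalRank_le (A : Matrix m (Fin C) ℝ) : kruskalRank A ≤ C :=
  (kruskalRank_mem A).1

theorem kIndependent_kruskalRank (A : Matrix m (Fin C) ℝ) :
    KIndependent ℝ (kruskalRank A) A.col := by
  intro s hs
  obtain ⟨t, hst, ht⟩ := exists_superset_card_eq hs (by simpa using kruskalRank_le A)
  exact LinearIndepOn.mono ((kruskalRank_mem A).2 t ht) (coe_subset.2 hst)

variable [Fintype l] [Fintype m]

theorem eq_zero_of_mul_diagonal_mul_transpose_eq_zero {A : Matrix l (Fin C) ℝ}
    {B : Matrix m (Fin C) ℝ} (hAB : C + 2 ≤ kruskalRank A + kruskalRank B) {x : Fin C → ℝ}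
    (hx : A * diagonal x * Bᵀ = 0) : x = 0 := by
  have h := min_add_min_le_rank_mul_diagonal_mul_transpose (kIndependent_kruskalRank A)
    (kIndependent_kruskalRank B) x
  rw [hx, rank_zero] at h
  have hA := kruskalRank_le A
  have hB := kruskalRank_le B
  have hw : hammingNorm x ≤ C := hammingNorm_le_card_fintype.trans_eq (Fintype.card_fin C)
  rw [← hammingNorm_eq_zero]
  omega

theorem perm_eq_of_sum_eq {A A' : Matrix l (Fin C) ℝ} {B B' : Matrix m (Fin C) ℝ}
    {D D' : Matrix n (Fin C) ℝ}
    (heq : ∀ i j k, ∑ c, A i c * B j c * D k c = ∑ c, A' i c * B' j c * D' k c)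
    (hk : 2 * C + 2 ≤ kruskalRank A + kruskalRank B + kruskalRank D)
    {σA σB σD : Equiv.Perm (Fin C)} {a b d : Fin C → ℝ} (ha : ∀ c, a c ≠ 0) (hb : ∀ c, b c ≠ 0)
    (hd : ∀ c, d c ≠ 0) (hA : ∀ c, A'.col c = a c • A.col (σA c))
    (hB : ∀ c, B'.col c = b c • B.col (σB c)) (hD : ∀ c, D'.col c = d c • D.col (σD c)) :
    σA = σB := by
  have hkA := kruskalRank_le A
  have hkB := kruskalRank_le B
  have hkD := kruskalRank_le D
  by_contra hne
  obtain ⟨c₀, hc₀⟩ : ∃ c₀, σA c₀ ≠ σB c₀ := not_forall.1 (mt Equiv.ext hne)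
  -- `u` kills the columns of `A` in `E` and `w` those of `B` outside `E`, so after contracting
  -- with `u` and `w` only the terms `c` with `σB c ∈ E` survive on the right: at most
  -- `C + 1 - k_B ≤ k_D` of them, yet the one at `c₀` does not vanish.
  obtain ⟨E, hBE, hEA, hE⟩ := exists_subsuperset_card_eq (s := {σB c₀})
    (t := univ.erase (σA c₀)) (n := C + 1 - kruskalRank B) (by simpa using hc₀.symm)
    (by simp; omega) (by simp [card_erase_of_mem]; omega)
  obtain ⟨u, hu⟩ := (kIndependent_kruskalRank A).exists_dual_apply_eq_zero_iff (s := E) (by omega)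
  obtain ⟨w, hw⟩ := (kIndependent_kruskalRank B).exists_dual_apply_eq_zero_iff (s := Eᶜ)
    (by rw [card_compl, Fintype.card_fin]; omega)
  set ξ : Fin C → ℝ := fun e => a (σD.symm e) * b (σD.symm e) * d (σD.symm e) *
    u (A.col (σA (σD.symm e))) * w (B.col (σB (σD.symm e)))
  have hξ : ∑ e, ξ e • D.col e = 0 := by
    rw [← Equiv.sum_comp σD]
    simp only [ξ, Equiv.symm_apply_apply]
    rw [← sum_dual_mul_dual_smul_col_eq heq hA hB hD u w]
    refine sum_eq_zero fun c _ => ?_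
    by_cases hc : c ∈ E
    · simp [(hu c).2 hc]
    · simp [(hw c).2 (mem_compl.2 hc)]
  have hξw : hammingNorm ξ ≤ kruskalRank D := by
    have hsub : ({e | ξ e ≠ 0} : Finset (Fin C)) ⊆ E.map (σB.symm.trans σD).toEmbedding := by
      intro e he
      rw [Finset.mem_map_equiv, Equiv.symm_trans_apply, Equiv.symm_symm]
      by_contra hE'
      exact (mem_filter.1 he).2 (by simp only [ξ, (hw _).2 (mem_compl.2 hE'), mul_zero])
    exact (card_le_card hsub).trans (by rw [card_map]; omega)
  have := congrFun ((kIndependent_kruskalRank D).eq_zero_of_sum_smul_eq_zero hξ hξw) (σD c₀)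
  simp only [ξ, Equiv.symm_apply_apply, Pi.zero_apply] at this
  exact mul_ne_zero (mul_ne_zero (mul_ne_zero (mul_ne_zero (ha c₀) (hb c₀)) (hd c₀))
    (mt (hu _).1 fun h => (mem_erase.1 (hEA h)).1 rfl))
    (mt (hw _).1 fun h => mem_compl.1 h (hBE (mem_singleton_self _))) this

theorem weightCondition_of_sum_eq {X X' : Matrix l (Fin C) ℝ} {Y Y' : Matrix m (Fin C) ℝ}
    {H H' : Matrix n (Fin C) ℝ}
    (heq : ∀ i j r, ∑ c, X i c * Y j c * H r c = ∑ c, X' i c * Y' j c * H' r c)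
    (hk : 2 * C + 2 ≤ kruskalRank X + kruskalRank Y + kruskalRank H) :
    WeightCondition ℝ (kruskalRank H) H.col H'.col := by
  intro f hf
  have hmat : X * diagonal (f ∘ H.col) * Yᵀ = X' * diagonal (f ∘ H'.col) * Y'ᵀ := by
    refine Matrix.ext fun i j => ?_
    simp only [mul_diagonal_dual_col_mul_transpose_apply, heq]
  have hlow := min_add_min_le_rank_mul_diagonal_mul_transpose (kIndependent_kruskalRank X)
    (kIndependent_kruskalRank Y) (f ∘ H.col)
  have hup : (X' * diagonal (f ∘ H'.col) * Y'ᵀ).rank ≤ hammingNorm (f ∘ H'.col) :=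
    ((rank_mul_le_left _ _).trans (rank_mul_le_right _ _)).trans_eq
      (by rw [rank_diagonal, Fintype.card_subtype]; rfl)
  rw [hmat] at hlow
  rw [Fintype.card_fin] at hf
  have := kruskalRank_le X
  have := kruskalRank_le Y
  have := kruskalRank_le H
  have : hammingNorm (f ∘ H.col) ≤ C := hammingNorm_le_card_fintype.trans_eq (Fintype.card_fin C)
  omega

theorem prod_eq_one_of_sum_eq {A A' : Matrix l (Fin C) ℝ} {B B' : Matrix m (Fin C) ℝ}
    {D D' : Matrix n (Fin C) ℝ}
    (heq : ∀ i j k, ∑ c, A i c * B j c * D k c = ∑ c, A' i c * B' j c * D' k c)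
    (hAB : C + 2 ≤ kruskalRank A + kruskalRank B) (hD1 : 1 ≤ kruskalRank D)
    {σ : Equiv.Perm (Fin C)} {a b d : Fin C → ℝ} (hA : ∀ c, A'.col c = a c • A.col (σ c))
    (hB : ∀ c, B'.col c = b c • B.col (σ c)) (hD : ∀ c, D'.col c = d c • D.col (σ c))
    (c : Fin C) : a c * b c * d c = 1 := by
  have hA' : ∀ i c, A' i c = a c * A i (σ c) := fun i c => congrFun (hA c) i
  have hB' : ∀ j c, B' j c = b c * B j (σ c) := fun j c => congrFun (hB c) j
  have hD' : ∀ k c, D' k c = d c * D k (σ c) := fun k c => congrFun (hD c) k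
  set θ := fun c => a c * b c * d c
  have hzero : ∀ r, A * diagonal (fun e => (1 - θ (σ.symm e)) * D r e) * Bᵀ = 0 := by
    intro r
    ext i j
    have hrhs : ∑ c, A' i c * B' j c * D' r c = ∑ e, θ (σ.symm e) * (A i e * B j e * D r e) := by
      rw [← Equiv.sum_comp σ (fun e => θ (σ.symm e) * (A i e * B j e * D r e))]
      refine sum_congr rfl fun c _ => ?_
      simp only [hA', hB', hD', Equiv.symm_apply_apply, θ]
      ring
    rw [mul_diagonal_mul_transpose_apply, Matrix.zero_apply]
    calc ∑ e, A i e * ((1 - θ (σ.symm e)) * D r e) * B j e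
        = ∑ e, A i e * B j e * D r e - ∑ e, θ (σ.symm e) * (A i e * B j e * D r e) := by
          rw [← sum_sub_distrib]
          exact sum_congr rfl fun _ _ => by ring
      _ = 0 := by rw [heq, hrhs, sub_self]
  obtain ⟨r, hr⟩ : ∃ r, D r (σ c) ≠ 0 := by
    by_contra! h
    exact (kIndependent_kruskalRank D).ne_zero hD1 (σ c) (funext h)
  have := congrFun (eq_zero_of_mul_diagonal_mul_transpose_eq_zero hAB (hzero r)) (σ c)
  simp only [Equiv.symm_apply_apply, Pi.zero_apply, mul_eq_zero, hr, or_false, sub_eq_zero] at this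
  exact this.symm

end Kruskal

theorem stmt10_general {I J K C : ℕ}
    (A Abar : Matrix (Fin I) (Fin C) ℝ)
    (B Bbar : Matrix (Fin J) (Fin C) ℝ)
    (D Dbar : Matrix (Fin K) (Fin C) ℝ)
    (heq : ∀ i j k, ∑ c, A i c * B j c * D k c = ∑ c, Abar i c * Bbar j c * Dbar k c)
    (hk : kruskalRank A + kruskalRank B + kruskalRank D ≥ 2 * C + 2) :
    ∃ (σ : Equiv.Perm (Fin C)) (a b d : Fin C → ℝ),
      (∀ c, a c ≠ 0 ∧ b c ≠ 0 ∧ d c ≠ 0 ∧ a c * b c * d c = 1) ∧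
      (∀ i c, Abar i c = a c * A i (σ c)) ∧
      (∀ j c, Bbar j c = b c * B j (σ c)) ∧
      (∀ k c, Dbar k c = d c * D k (σ c)) := by
  have hkA := kruskalRank_le A
  have hkB := kruskalRank_le B
  have hkD := kruskalRank_le D
  have heq' := sum_mul_mul_rotate heq
  have heq'' := sum_mul_mul_rotate heq'
  obtain ⟨σA, a, ha, hA⟩ := (weightCondition_of_sum_eq heq' (by omega)).exists_perm
    (kIndependent_kruskalRank A) (by omega) (by simpa using hkA)
  obtain ⟨σB, b, hb, hB⟩ := (weightCondition_of_sum_eq heq'' (by omega)).exists_perm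
    (kIndependent_kruskalRank B) (by omega) (by simpa using hkB)
  obtain ⟨σD, d, hd, hD⟩ := (weightCondition_of_sum_eq heq (by omega)).exists_perm
    (kIndependent_kruskalRank D) (by omega) (by simpa using hkD)
  obtain rfl : σA = σB := perm_eq_of_sum_eq heq (by omega) ha hb hd hA hB hD
  obtain rfl : σA = σD := perm_eq_of_sum_eq heq' (by omega) hb hd ha hB hD hA
  refine ⟨σA, a, b, d, fun c => ⟨ha c, hb c, hd c, ?_⟩, fun i c => congrFun (hA c) i,
    fun j c => congrFun (hB c) j, fun k c => congrFun (hD c) k⟩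
  exact prod_eq_one_of_sum_eq heq (by omega) (by omega) hA hB hD c

/-- Kruskal's theorem: uniqueness of the three-way decomposition
up to simultaneous permutation and rescaling of columns, under the Kruskal-rank
condition `rank_K(A) + rank_K(B) + rank_K(D) ≥ 2C + 2`. -/
theorem stmt10 {I J K C : ℕ} (hC : 1 ≤ C)
    (A Abar : Matrix (Fin I) (Fin C) ℝ)
    (B Bbar : Matrix (Fin J) (Fin C) ℝ)
    (D Dbar : Matrix (Fin K) (Fin C) ℝ)
    (heq : ∀ i j k, ∑ c, A i c * B j c * D k c = ∑ c, Abar i c * Bbar j c * Dbar k c)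
    (hk : kruskalRank A + kruskalRank B + kruskalRank D ≥ 2 * C + 2) :
    ∃ (σ : Equiv.Perm (Fin C)) (a b d : Fin C → ℝ),
      (∀ c, a c ≠ 0 ∧ b c ≠ 0 ∧ d c ≠ 0 ∧ a c * b c * d c = 1) ∧
      (∀ i c, Abar i c = a c * A i (σ c)) ∧
      (∀ j c, Bbar j c = b c * B j (σ c)) ∧
      (∀ k c, Dbar k c = d c * D k (σ c)) :=
  stmt10_general A Abar B Bbar D Dbar heq hk
end
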